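/- arXiv:1507.06558 — 3 statements merged into one kernel-verified Lean document; each statement's English description precedes it below -/
import Mathlib

section
/- For every ℝ-linear map L : ℍ → W one has the pointwise energy identity Ω_I(L(1), L(i)) + Ω_I(L(j), L(k)) + Ω_J(L(1), L(j)) + Ω_J(L(k), L(i)) + Ω_K(L(1), L(k)) + Ω_K(L(i), L(j)) = (1/2)·‖L‖² − (1/8)·‖D_L‖², where D_L is the ℝ-linear map D_L(x) := L(x) − I(L(i·x)) − J(L(j·x)) − K(L(k·x)) and ‖D_L‖² is its squared Hilbert–Schmidt norm. (This is the flat, pointwise form of the identity expressing the Dirichlet energy density of a triholomorphic map through the Kähler forms, paper eq. (2.1)–(2.2).) -/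
open scoped Quaternion RealInnerProductSpace

/-- The quaternion unit `i`. -/
noncomputable def Quat.i : ℍ[ℝ] := ⟨0, 1, 0, 0⟩
/-- The quaternion unit `j`. -/
noncomputable def Quat.j : ℍ[ℝ] := ⟨0, 0, 1, 0⟩
/-- The quaternion unit `k`. -/
noncomputable def Quat.k : ℍ[ℝ] := ⟨0, 0, 0, 1⟩

/-!
Write `a, b, c, d` for `L 1, L i, L j, L k`. By the quaternion multiplication table the values
of `D` at `1, i, j, k` are signed combinations of `a, b, c, d, I a, …, K d`. Expanding their
squared norms, the diagonal terms give `4 ‖L‖²` because `I, J, K` are isometries, and since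
`I, J, K` are skew-adjoint and compose like `i, j, k`, every cross term is one of the six
Kähler pairings, each occurring with total coefficient `-8`.
-/

namespace Quat

@[simp] lemma re_i : i.re = 0 := rfl
@[simp] lemma imI_i : i.imI = 1 := rfl
@[simp] lemma imJ_i : i.imJ = 0 := rfl
@[simp] lemma imK_i : i.imK = 0 := rfl
@[simp] lemma re_j : j.re = 0 := rfl
@[simp] lemma imI_j : j.imI = 0 := rfl
@[simp] lemma imJ_j : j.imJ = 1 := rfl
@[simp] lemma imK_j : j.imK = 0 := rfl
@[simp] lemma re_k : k.re = 0 := rfl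
@[simp] lemma imI_k : k.imI = 0 := rfl
@[simp] lemma imJ_k : k.imJ = 0 := rfl
@[simp] lemma imK_k : k.imK = 1 := rfl

@[simp] lemma i_mul_i : i * i = -1 := by ext <;> simp
@[simp] lemma i_mul_j : i * j = k := by ext <;> simp
@[simp] lemma i_mul_k : i * k = -j := by ext <;> simp
@[simp] lemma j_mul_i : j * i = -k := by ext <;> simp
@[simp] lemma j_mul_j : j * j = -1 := by ext <;> simp
@[simp] lemma j_mul_k : j * k = i := by ext <;> simp
@[simp] lemma k_mul_i : k * i = j := by ext <;> simp
@[simp] lemma k_mul_j : k * j = -i := by ext <;> simp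
@[simp] lemma k_mul_k : k * k = -1 := by ext <;> simp

end Quat

namespace LinearMap

variable {W : Type*} [NormedAddCommGroup W] [InnerProductSpace ℝ W] {f g h : W →ₗ[ℝ] W}

lemma apply_apply_of_comp_self_eq_neg_id (hf : f ∘ₗ f = -id) (v : W) : f (f v) = -v := by
  simpa using LinearMap.congr_fun hf v

lemma apply_apply_eq_neg_of_comp_eq (hg : g ∘ₗ g = -id) (hgh : g ∘ₗ h = f) (v : W) :
    g (f v) = -h v := by
  rw [← hgh, comp_apply, apply_apply_of_comp_self_eq_neg_id hg]

lemma inner_apply_left_of_comp_self_eq_neg_id (hf_inner : ∀ v w : W, ⟪f v, f w⟫ = ⟪v, w⟫)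
    (hf : f ∘ₗ f = -id) (v w : W) : ⟪f v, w⟫ = -⟪v, f w⟫ := by
  rw [← hf_inner, apply_apply_of_comp_self_eq_neg_id hf, inner_neg_left]

lemma inner_apply_right_comm_of_comp_self_eq_neg_id (hf_inner : ∀ v w : W, ⟪f v, f w⟫ = ⟪v, w⟫)
    (hf : f ∘ₗ f = -id) (v w : W) : ⟪w, f v⟫ = -⟪v, f w⟫ := by
  rw [real_inner_comm, inner_apply_left_of_comp_self_eq_neg_id hf_inner hf]

end LinearMap

open LinearMap in
theorem sum_norm_sq_cauchyFueter_eq {W : Type*} [NormedAddCommGroup W] [InnerProductSpace ℝ W]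
    {I J K : W →ₗ[ℝ] W} (hIinner : ∀ v w : W, ⟪I v, I w⟫ = ⟪v, w⟫)
    (hJinner : ∀ v w : W, ⟪J v, J w⟫ = ⟪v, w⟫) (hKinner : ∀ v w : W, ⟪K v, K w⟫ = ⟪v, w⟫)
    (hII : I ∘ₗ I = -LinearMap.id) (hJJ : J ∘ₗ J = -LinearMap.id) (hKK : K ∘ₗ K = -LinearMap.id)
    (hIJ : I ∘ₗ J = K) (hJK : J ∘ₗ K = I) (hKI : K ∘ₗ I = J) (a b c d : W) :
    ‖a - I b - J c - K d‖ ^ 2 + ‖b + I a + J d - K c‖ ^ 2 + ‖c - I d + J a + K b‖ ^ 2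
        + ‖d + I c - J b + K a‖ ^ 2
      = 4 * (‖a‖ ^ 2 + ‖b‖ ^ 2 + ‖c‖ ^ 2 + ‖d‖ ^ 2)
        - 8 * (⟪a, I b⟫ + ⟪c, I d⟫ + ⟪a, J c⟫ + ⟪d, J b⟫ + ⟪a, K d⟫ + ⟪b, K c⟫) := by
  have hIJ' : ∀ v, I (J v) = K v := LinearMap.congr_fun hIJ
  have hJK' : ∀ v, J (K v) = I v := LinearMap.congr_fun hJK
  have hKI' : ∀ v, K (I v) = J v := LinearMap.congr_fun hKI
  have hIK := apply_apply_eq_neg_of_comp_eq hII hIJ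
  have hJI := apply_apply_eq_neg_of_comp_eq hJJ hJK
  have hKJ := apply_apply_eq_neg_of_comp_eq hKK hKI
  have sI := inner_apply_left_of_comp_self_eq_neg_id hIinner hII
  have sJ := inner_apply_left_of_comp_self_eq_neg_id hJinner hJJ
  have sK := inner_apply_left_of_comp_self_eq_neg_id hKinner hKK
  have cI := inner_apply_right_comm_of_comp_self_eq_neg_id hIinner hII
  have cJ := inner_apply_right_comm_of_comp_self_eq_neg_id hJinner hJJ
  have cK := inner_apply_right_comm_of_comp_self_eq_neg_id hKinner hKK
  simp only [← real_inner_self_eq_norm_sq, inner_sub_left, inner_sub_right, inner_add_left,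
    inner_add_right, hIinner, hJinner, hKinner, sI, sJ, sK, inner_neg_right,
    hIJ', hJK', hKI', hIK, hJI, hKJ]
  rw [cI a b, cI c d, cJ a c, cJ d b, cK a d, cK b c]
  ring

/-- the pointwise energy identity
`Ω_I(L1,Li)+Ω_I(Lj,Lk)+Ω_J(L1,Lj)+Ω_J(Lk,Li)+Ω_K(L1,Lk)+Ω_K(Li,Lj)
  = (1/2)‖L‖² − (1/8)‖D_L‖²`. -/
theorem stmt0 {W : Type*} [NormedAddCommGroup W] [InnerProductSpace ℝ W]
    (I J K : W →ₗ[ℝ] W)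
    (hIinner : ∀ v w : W, ⟪I v, I w⟫ = ⟪v, w⟫)
    (hJinner : ∀ v w : W, ⟪J v, J w⟫ = ⟪v, w⟫)
    (hKinner : ∀ v w : W, ⟪K v, K w⟫ = ⟪v, w⟫)
    (hII : I ∘ₗ I = -LinearMap.id) (hJJ : J ∘ₗ J = -LinearMap.id)
    (hKK : K ∘ₗ K = -LinearMap.id)
    (hIJ : I ∘ₗ J = K) (hJK : J ∘ₗ K = I) (hKI : K ∘ₗ I = J)
    (L D : ℍ[ℝ] →ₗ[ℝ] W)
    (hD : ∀ x : ℍ[ℝ],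
      D x = L x - I (L (Quat.i * x)) - J (L (Quat.j * x)) - K (L (Quat.k * x))) :
    ⟪L 1, I (L Quat.i)⟫ + ⟪L Quat.j, I (L Quat.k)⟫
      + ⟪L 1, J (L Quat.j)⟫ + ⟪L Quat.k, J (L Quat.i)⟫
      + ⟪L 1, K (L Quat.k)⟫ + ⟪L Quat.i, K (L Quat.j)⟫
      = (1 / 2) * (‖L 1‖ ^ 2 + ‖L Quat.i‖ ^ 2 + ‖L Quat.j‖ ^ 2 + ‖L Quat.k‖ ^ 2)
        - (1 / 8) * (‖D 1‖ ^ 2 + ‖D Quat.i‖ ^ 2 + ‖D Quat.j‖ ^ 2 + ‖D Quat.k‖ ^ 2) := by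
  have hD1 : D 1 = L 1 - I (L Quat.i) - J (L Quat.j) - K (L Quat.k) := by simpa using hD 1
  have hDi : D Quat.i = L Quat.i + I (L 1) + J (L Quat.k) - K (L Quat.j) := by
    simp only [hD, Quat.i_mul_i, Quat.j_mul_i, Quat.k_mul_i, map_neg]; abel
  have hDj : D Quat.j = L Quat.j - I (L Quat.k) + J (L 1) + K (L Quat.i) := by
    simp only [hD, Quat.i_mul_j, Quat.j_mul_j, Quat.k_mul_j, map_neg]; abel
  have hDk : D Quat.k = L Quat.k + I (L Quat.j) - J (L Quat.i) + K (L 1) := by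
    simp only [hD, Quat.i_mul_k, Quat.j_mul_k, Quat.k_mul_k, map_neg]; abel
  have hsum := sum_norm_sq_cauchyFueter_eq hIinner hJinner hKinner hII hJJ hKK hIJ hJK hKI
    (L 1) (L Quat.i) (L Quat.j) (L Quat.k)
  rw [hD1, hDi, hDj, hDk]
  linarith
end

section
/- For every ℝ-linear map L : ℍ → W one has Ω_I(L(1), L(i)) + Ω_I(L(j), L(k)) + Ω_J(L(1), L(j)) + Ω_J(L(k), L(i)) + Ω_K(L(1), L(k)) + Ω_K(L(i), L(j)) ≤ (1/2)·‖L‖², with equality if and only if L is triholomorphic, i.e. L(x) = I(L(i·x)) + J(L(j·x)) + K(L(k·x)) for all x ∈ ℍ. (Pointwise 'null Lagrangian' inequality underlying the calibrated nature of triholomorphic maps.) -/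
open scoped Quaternion RealInnerProductSpace

namespace Quat

lemma eq_re_smul_one_add (x : ℍ[ℝ]) : x = x.re • 1 + x.imI • i + x.imJ • j + x.imK • k := by
  ext <;> simp

lemma linearMap_apply {V : Type*} [AddCommGroup V] [Module ℝ V]
    (f : ℍ[ℝ] →ₗ[ℝ] V) (x : ℍ[ℝ]) :
    f x = x.re • f 1 + x.imI • f i + x.imJ • f j + x.imK • f k := by
  conv_lhs => rw [eq_re_smul_one_add x]
  simp only [map_add, map_smul]

end Quat

section Hypercomplex

variable {W : Type*} [NormedAddCommGroup W] [InnerProductSpace ℝ W]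

lemma inner_apply_left_eq_neg_of_comp_self_eq_neg {T : W →ₗ[ℝ] W}
    (hT : ∀ v w : W, ⟪T v, T w⟫ = ⟪v, w⟫) (hTT : T ∘ₗ T = -LinearMap.id) (v w : W) :
    ⟪T v, w⟫ = -⟪v, T w⟫ := by
  have h := hT v (T w)
  rw [← LinearMap.comp_apply, hTT] at h
  simp only [LinearMap.neg_apply, LinearMap.id_apply, inner_neg_right] at h
  linarith

noncomputable def triholomorphicDefect (I J K : W →ₗ[ℝ] W) (L : ℍ[ℝ] →ₗ[ℝ] W) :
    ℍ[ℝ] →ₗ[ℝ] W :=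
  L - I ∘ₗ L ∘ₗ LinearMap.mulLeft ℝ Quat.i - J ∘ₗ L ∘ₗ LinearMap.mulLeft ℝ Quat.j
    - K ∘ₗ L ∘ₗ LinearMap.mulLeft ℝ Quat.k

variable (I J K : W →ₗ[ℝ] W) (L : ℍ[ℝ] →ₗ[ℝ] W)

@[simp]
lemma triholomorphicDefect_apply (x : ℍ[ℝ]) :
    triholomorphicDefect I J K L x =
      L x - I (L (Quat.i * x)) - J (L (Quat.j * x)) - K (L (Quat.k * x)) :=
  rfl

lemma triholomorphicDefect_one :
    triholomorphicDefect I J K L 1 = L 1 - I (L Quat.i) - J (L Quat.j) - K (L Quat.k) := by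
  simp only [triholomorphicDefect_apply, mul_one]

variable {I J K}

lemma triholomorphicDefect_i_mul (hII : I ∘ₗ I = -LinearMap.id) (hIJ : I ∘ₗ J = K)
    (x : ℍ[ℝ]) : triholomorphicDefect I J K L (Quat.i * x) = I (triholomorphicDefect I J K L x) := by
  have pII (v : W) : I (I v) = -v := by simpa using LinearMap.congr_fun hII v
  have pIJ (v : W) : I (J v) = K v := LinearMap.congr_fun hIJ v
  have pIK (v : W) : I (K v) = -J v := by rw [← pIJ, pII]
  simp only [triholomorphicDefect_apply, ← mul_assoc, Quat.i_mul_i, Quat.j_mul_i, Quat.k_mul_i,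
    neg_mul, one_mul, map_neg, map_sub, pII, pIJ, pIK]
  abel

lemma triholomorphicDefect_j_mul (hJJ : J ∘ₗ J = -LinearMap.id) (hJK : J ∘ₗ K = I)
    (x : ℍ[ℝ]) : triholomorphicDefect I J K L (Quat.j * x) = J (triholomorphicDefect I J K L x) := by
  have pJJ (v : W) : J (J v) = -v := by simpa using LinearMap.congr_fun hJJ v
  have pJK (v : W) : J (K v) = I v := LinearMap.congr_fun hJK v
  have pJI (v : W) : J (I v) = -K v := by rw [← pJK, pJJ]
  simp only [triholomorphicDefect_apply, ← mul_assoc, Quat.i_mul_j, Quat.j_mul_j, Quat.k_mul_j,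
    neg_mul, one_mul, map_neg, map_sub, pJJ, pJK, pJI]
  abel

lemma triholomorphicDefect_k_mul (hKK : K ∘ₗ K = -LinearMap.id) (hKI : K ∘ₗ I = J)
    (x : ℍ[ℝ]) : triholomorphicDefect I J K L (Quat.k * x) = K (triholomorphicDefect I J K L x) := by
  have pKK (v : W) : K (K v) = -v := by simpa using LinearMap.congr_fun hKK v
  have pKI (v : W) : K (I v) = J v := LinearMap.congr_fun hKI v
  have pKJ (v : W) : K (J v) = -I v := by rw [← pKI, pKK]
  simp only [triholomorphicDefect_apply, ← mul_assoc, Quat.i_mul_k, Quat.j_mul_k, Quat.k_mul_k,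
    neg_mul, one_mul, map_neg, map_sub, pKK, pKI, pKJ]
  abel

lemma triholomorphicDefect_eq_zero_iff
    (hII : I ∘ₗ I = -LinearMap.id) (hJJ : J ∘ₗ J = -LinearMap.id) (hKK : K ∘ₗ K = -LinearMap.id)
    (hIJ : I ∘ₗ J = K) (hJK : J ∘ₗ K = I) (hKI : K ∘ₗ I = J) :
    triholomorphicDefect I J K L = 0 ↔ triholomorphicDefect I J K L 1 = 0 := by
  refine ⟨fun h ↦ by rw [h, LinearMap.zero_apply], fun h ↦ LinearMap.ext fun x ↦ ?_⟩
  rw [Quat.linearMap_apply, ← mul_one Quat.i, ← mul_one Quat.j, ← mul_one Quat.k,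
    triholomorphicDefect_i_mul L hII hIJ, triholomorphicDefect_j_mul L hJJ hJK,
    triholomorphicDefect_k_mul L hKK hKI, h]
  simp

lemma norm_sq_sub_sub_sub
    (hIinner : ∀ v w : W, ⟪I v, I w⟫ = ⟪v, w⟫) (hJinner : ∀ v w : W, ⟪J v, J w⟫ = ⟪v, w⟫)
    (hKinner : ∀ v w : W, ⟪K v, K w⟫ = ⟪v, w⟫)
    (hII : I ∘ₗ I = -LinearMap.id) (hJJ : J ∘ₗ J = -LinearMap.id)
    (hIJ : I ∘ₗ J = K) (hJK : J ∘ₗ K = I) (a b c d : W) :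
    ‖a - I b - J c - K d‖ ^ 2 = (‖a‖ ^ 2 + ‖b‖ ^ 2 + ‖c‖ ^ 2 + ‖d‖ ^ 2)
      - 2 * (⟪a, I b⟫ + ⟪c, I d⟫ + ⟪a, J c⟫ + ⟪d, J b⟫ + ⟪a, K d⟫ + ⟪b, K c⟫) := by
  have hIskew := inner_apply_left_eq_neg_of_comp_self_eq_neg hIinner hII
  have hJskew := inner_apply_left_eq_neg_of_comp_self_eq_neg hJinner hJJ
  have pIK (v : W) : I (K v) = -J v := by
    rw [← hIJ, LinearMap.comp_apply, ← LinearMap.comp_apply I I, hII]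
    rfl
  have hJI : ⟪J c, I b⟫ = -⟪b, K c⟫ := by
    rw [real_inner_comm, hIskew, ← LinearMap.comp_apply, hIJ]
  have hKI : ⟪K d, I b⟫ = -⟪d, J b⟫ := by
    rw [real_inner_comm, hIskew, pIK, inner_neg_right, neg_neg, real_inner_comm, hJskew]
  have hKJ : ⟪K d, J c⟫ = -⟪c, I d⟫ := by
    rw [real_inner_comm, hJskew, ← LinearMap.comp_apply, hJK]
  simp only [← real_inner_self_eq_norm_sq, inner_sub_left, inner_sub_right, hIinner, hJinner,
    hKinner]
  linarith [real_inner_comm a (I b), real_inner_comm a (J c), real_inner_comm a (K d),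
    real_inner_comm (I b) (J c), real_inner_comm (I b) (K d), real_inner_comm (J c) (K d)]

end Hypercomplex

/-- the pointwise null-Lagrangian inequality
`Ω_I(L1,Li)+Ω_I(Lj,Lk)+Ω_J(L1,Lj)+Ω_J(Lk,Li)+Ω_K(L1,Lk)+Ω_K(Li,Lj) ≤ (1/2)‖L‖²`,
with equality if and only if `L` is triholomorphic. -/
theorem stmt1 {W : Type*} [NormedAddCommGroup W] [InnerProductSpace ℝ W]
    (I J K : W →ₗ[ℝ] W)
    (hIinner : ∀ v w : W, ⟪I v, I w⟫ = ⟪v, w⟫)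
    (hJinner : ∀ v w : W, ⟪J v, J w⟫ = ⟪v, w⟫)
    (hKinner : ∀ v w : W, ⟪K v, K w⟫ = ⟪v, w⟫)
    (hII : I ∘ₗ I = -LinearMap.id) (hJJ : J ∘ₗ J = -LinearMap.id)
    (hKK : K ∘ₗ K = -LinearMap.id)
    (hIJ : I ∘ₗ J = K) (hJK : J ∘ₗ K = I) (hKI : K ∘ₗ I = J)
    (L : ℍ[ℝ] →ₗ[ℝ] W) :
    (⟪L 1, I (L Quat.i)⟫ + ⟪L Quat.j, I (L Quat.k)⟫
        + ⟪L 1, J (L Quat.j)⟫ + ⟪L Quat.k, J (L Quat.i)⟫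
        + ⟪L 1, K (L Quat.k)⟫ + ⟪L Quat.i, K (L Quat.j)⟫
      ≤ (1 / 2) * (‖L 1‖ ^ 2 + ‖L Quat.i‖ ^ 2 + ‖L Quat.j‖ ^ 2 + ‖L Quat.k‖ ^ 2))
    ∧ ((⟪L 1, I (L Quat.i)⟫ + ⟪L Quat.j, I (L Quat.k)⟫
        + ⟪L 1, J (L Quat.j)⟫ + ⟪L Quat.k, J (L Quat.i)⟫
        + ⟪L 1, K (L Quat.k)⟫ + ⟪L Quat.i, K (L Quat.j)⟫
      = (1 / 2) * (‖L 1‖ ^ 2 + ‖L Quat.i‖ ^ 2 + ‖L Quat.j‖ ^ 2 + ‖L Quat.k‖ ^ 2))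
      ↔ ∀ x : ℍ[ℝ],
          L x = I (L (Quat.i * x)) + J (L (Quat.j * x)) + K (L (Quat.k * x))) := by
  have key := norm_sq_sub_sub_sub hIinner hJinner hKinner hII hJJ hIJ hJK
    (L 1) (L Quat.i) (L Quat.j) (L Quat.k)
  rw [← triholomorphicDefect_one] at key
  have hnonneg := sq_nonneg ‖triholomorphicDefect I J K L 1‖
  refine ⟨by linarith, ?_⟩
  calc _ ↔ ‖triholomorphicDefect I J K L 1‖ ^ 2 = 0 := by constructor <;> intro h <;> linarith
    _ ↔ triholomorphicDefect I J K L = 0 := by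
      rw [triholomorphicDefect_eq_zero_iff L hII hJJ hKK hIJ hJK hKI, sq_eq_zero_iff, norm_eq_zero]
    _ ↔ _ := by
      simp only [LinearMap.ext_iff, triholomorphicDefect_apply, LinearMap.zero_apply, sub_sub,
        sub_eq_zero]
end

section
/- Let n ≥ 2, let μ be a finite Borel measure on ℝⁿ with total mass μ(ℝⁿ) ≤ Λ, let ε₀ > 0, δ₀ > 0, and let S ⊆ ℝⁿ be a set such that μ(B_δ(x)) ≥ ε₀ δ^{n−2} for every x ∈ S and every δ ∈ (0, δ₀). Then for every δ ∈ (0, δ₀) the Lebesgue measure of the δ-neighbourhood {y ∈ ℝⁿ : dist(y, S) < δ} is at most C(n) (Λ/ε₀) δ², where C(n) depends only on n. (The refinement of the covering argument bounding the 2-codimensional Minkowski content of the blow-up set.) -/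
/-!
Every point `y` of the `δ`-neighbourhood of `S` has some `x ∈ S` with `B_δ(x) ⊆ B_{2δ}(y)`, so
`μ(B_{2δ}(y)) ≥ ε₀ δ^{n-2}` there. By Fubini, the integral of `y ↦ μ(B_{2δ}(y))` over `ℝⁿ` is
`μ(ℝⁿ) |B_{2δ}| ≤ Λ ωₙ 2ⁿ δⁿ`, and it dominates `ε₀ δ^{n-2} |{dist(·, S) < δ}|`.
-/

open MeasureTheory Metric
open scoped ENNReal

section BallAveraging

variable {α : Type*} [PseudoMetricSpace α] [MeasurableSpace α] [OpensMeasurableSpace α]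

theorem lintegral_measure_ball_comm [SecondCountableTopology α]
    (μ ν : Measure α) [SFinite μ] [SFinite ν] (r : ℝ) :
    ∫⁻ y, μ (ball y r) ∂ν = ∫⁻ x, ν (ball x r) ∂μ := by
  have hs : MeasurableSet {p : α × α | dist p.2 p.1 < r} :=
    measurableSet_lt (measurable_dist.comp measurable_swap) measurable_const
  calc ∫⁻ y, μ (ball y r) ∂ν = ν.prod μ {p | dist p.2 p.1 < r} := (Measure.prod_apply hs).symm
    _ = ∫⁻ x, ν (ball x r) ∂μ := by
      rw [Measure.prod_apply_symm hs]
      refine lintegral_congr fun x => congrArg ν (Set.ext fun y => ?_)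
      exact mem_ball_comm

theorem mul_measure_thickening_le_lintegral_measure_ball {μ ν : Measure α} {S : Set α}
    {r : ℝ} {c : ℝ≥0∞} (hS : ∀ x ∈ S, c ≤ μ (ball x r)) :
    c * ν (thickening r S) ≤ ∫⁻ y, μ (ball y (2 * r)) ∂ν := by
  have hlow : ∀ y ∈ thickening r S, c ≤ μ (ball y (2 * r)) := by
    intro y hy
    obtain ⟨x, hxS, hyx⟩ := mem_thickening_iff.1 hy
    refine (hS x hxS).trans (measure_mono fun z hz => ?_)
    rw [mem_ball] at hz ⊢
    linarith [dist_triangle z x y, dist_comm x y]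
  calc c * ν (thickening r S) = ∫⁻ _ in thickening r S, c ∂ν := (setLIntegral_const _ _).symm
    _ ≤ ∫⁻ y in thickening r S, μ (ball y (2 * r)) ∂ν :=
      setLIntegral_mono' isOpen_thickening.measurableSet hlow
    _ ≤ ∫⁻ y, μ (ball y (2 * r)) ∂ν := setLIntegral_le_lintegral _ _

end BallAveraging

theorem lintegral_measure_ball_eq_mul_addHaar_ball {E : Type*} [NormedAddCommGroup E]
    [NormedSpace ℝ E] [MeasurableSpace E] [BorelSpace E] [FiniteDimensional ℝ E]
    (μ ν : Measure E) [SFinite μ] [ν.IsAddHaarMeasure] (r : ℝ) :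
    ∫⁻ y, μ (ball y r) ∂ν = μ Set.univ * ν (ball 0 r) := by
  simp_rw [lintegral_measure_ball_comm μ ν, Measure.addHaar_ball_center ν, lintegral_const,
    mul_comm]

theorem mul_addHaar_thickening_le {E : Type*} [NormedAddCommGroup E]
    [NormedSpace ℝ E] [MeasurableSpace E] [BorelSpace E] [FiniteDimensional ℝ E]
    {μ ν : Measure E} [SFinite μ] [ν.IsAddHaarMeasure] {S : Set E} {r : ℝ} (hr : 0 < r)
    {c : ℝ≥0∞} (hS : ∀ x ∈ S, c ≤ μ (ball x r)) :
    c * ν (thickening r S) ≤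
      μ Set.univ * ENNReal.ofReal ((2 * r) ^ Module.finrank ℝ E) * ν (ball 0 1) := by
  calc c * ν (thickening r S) ≤ ∫⁻ y, μ (ball y (2 * r)) ∂ν :=
        mul_measure_thickening_le_lintegral_measure_ball hS
    _ = _ := by
      rw [lintegral_measure_ball_eq_mul_addHaar_ball, Measure.addHaar_ball_of_pos ν _ (by positivity),
        mul_assoc]

/-- under the same lower density bound as in the covering argument, the
`δ`-neighbourhood of `S` has Lebesgue measure at most `C(n) (Λ/ε₀) δ²` for all `δ ∈ (0, δ₀)`
(bound on the 2-codimensional Minkowski content of the blow-up set). -/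
theorem stmt13 (n : ℕ) (hn : 2 ≤ n) :
    ∃ C : ℝ≥0∞, C ≠ ⊤ ∧
      ∀ (μ : Measure (EuclideanSpace ℝ (Fin n))) (Λ ε₀ δ₀ : ℝ)
        (S : Set (EuclideanSpace ℝ (Fin n))),
        IsFiniteMeasure μ →
        μ Set.univ ≤ ENNReal.ofReal Λ →
        0 < ε₀ → 0 < δ₀ →
        (∀ x ∈ S, ∀ δ : ℝ, 0 < δ → δ < δ₀ →
          ENNReal.ofReal (ε₀ * δ ^ (n - 2)) ≤ μ (Metric.ball x δ)) →
        ∀ δ : ℝ, 0 < δ → δ < δ₀ →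
          volume (Metric.thickening δ S)
            ≤ C * (ENNReal.ofReal Λ / ENNReal.ofReal ε₀) * ENNReal.ofReal (δ ^ 2) := by
  set B := volume (ball (0 : EuclideanSpace ℝ (Fin n)) 1)
  refine ⟨ENNReal.ofReal (2 ^ n) * B, ENNReal.mul_ne_top ENNReal.ofReal_ne_top
    measure_ball_lt_top.ne, ?_⟩
  intro μ Λ ε₀ δ₀ S _ hΛ hε₀ _ hS δ hδ hδδ₀
  have hc : ENNReal.ofReal (ε₀ * δ ^ (n - 2)) ≠ 0 := (ENNReal.ofReal_pos.2 (by positivity)).ne'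
  have hbound := mul_addHaar_thickening_le (ν := volume) hδ fun x hx => hS x hx δ hδ hδδ₀
  rw [finrank_euclideanSpace_fin] at hbound
  have hpow : (2 * δ) ^ n = 2 ^ n * δ ^ 2 * δ ^ (n - 2) := by
    rw [mul_pow, mul_assoc, ← pow_add, Nat.add_sub_cancel' hn]
  rw [← ENNReal.mul_le_mul_iff_left hc ENNReal.ofReal_ne_top, mul_comm]
  calc _ ≤ ENNReal.ofReal Λ * ENNReal.ofReal ((2 * δ) ^ n) * B :=
        hbound.trans (by gcongr)
    _ = ENNReal.ofReal (2 ^ n) * B * (ENNReal.ofReal Λ / ENNReal.ofReal ε₀ * ENNReal.ofReal ε₀)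
          * ENNReal.ofReal (δ ^ 2) * ENNReal.ofReal (δ ^ (n - 2)) := by
      rw [ENNReal.div_mul_cancel (ENNReal.ofReal_pos.2 hε₀).ne' ENNReal.ofReal_ne_top, hpow,
        ENNReal.ofReal_mul (by positivity), ENNReal.ofReal_mul (by positivity)]
      ring
    _ = _ := by
      rw [ENNReal.ofReal_mul hε₀.le]
      ring
end
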